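/- (Čech descent.) Let κ be a regular cardinal and let (C, τ) be a κ-geometric site. Then a presheaf F : Cᵒᵖ ⥤ Type is a sheaf for the Grothendieck topology generated by τ if and only if both of the following hold: (1) F preserves κ-small products; and (2) for every τ-covering family {fᵢ : Uᵢ ⟶ X} indexed by a κ-small type, F satisfies the sheaf condition for the singleton presieve of the induced morphism Sigma.desc fᵢ : ∐ᵢ Uᵢ ⟶ X (equivalently, F(X) is the equalizer of the two maps F(∐ᵢ Uᵢ) ⇉ F((∐ᵢ Uᵢ) ×_X (∐ᵢ Uᵢ))). -/

import Mathlib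

/-!
Statement 1 (Čech descent): For a `κ`-geometric site `(C, τ)`, a presheaf `F : Cᵒᵖ ⥤ Type`
is a sheaf for the Grothendieck topology generated by `τ` iff `F` preserves `κ`-small
products and satisfies the sheaf condition for the singleton presieve of the induced map
`∐ᵢ Uᵢ ⟶ X` for every `κ`-small `τ`-covering family `{fᵢ : Uᵢ ⟶ X}`.
-/

open CategoryTheory Limits

universe u

/-- A presheaf `F : Cᵒᵖ ⥤ Type u` preserves `κ`-small products if it sends every coproduct
cocone of a family indexed by a `κ`-small type to a limit cone in `Type u`. -/
def PreservesKappaSmallProducts {C : Type u} [Category.{u} C] (κ : Cardinal.{u})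
    (F : Cᵒᵖ ⥤ Type u) : Prop :=
  ∀ {ι : Type u}, Cardinal.mk ι < κ → ∀ (X : ι → C) (c : Cofan X), IsColimit c →
    Nonempty (IsLimit (F.mapCone c.op))

/-- A category `C` with pullbacks is `κ`-geometric if it has coproducts of all `κ`-small
families of objects, and these coproducts are disjoint and universal. -/
structure KappaGeometric (κ : Cardinal.{u}) (C : Type u) [Category.{u} C]
    [HasPullbacks C] : Prop where
  hasCoproduct : ∀ {ι : Type u}, Cardinal.mk ι < κ → ∀ X : ι → C, HasCoproduct X
  mono_inj : ∀ {ι : Type u}, Cardinal.mk ι < κ → ∀ (X : ι → C) (c : Cofan X),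
    IsColimit c → ∀ i, Mono (c.inj i)
  disjoint : ∀ {ι : Type u}, Cardinal.mk ι < κ → ∀ (X : ι → C) (c : Cofan X),
    IsColimit c → ∀ i j, i ≠ j → Nonempty (IsInitial (pullback (c.inj i) (c.inj j)))
  universal : ∀ {ι : Type u}, Cardinal.mk ι < κ → ∀ (X : ι → C) (c : Cofan X),
    IsColimit c → ∀ {Y : C} (f : Y ⟶ c.pt),
      Nonempty (IsColimit (Cofan.mk Y (fun i => pullback.snd (c.inj i) f)))

/-- A `κ`-geometric site is a `κ`-geometric category together with a Grothendieck
pretopology `τ` such that the presieve of coproduct inclusions of any `κ`-small family is a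
`τ`-covering, and every `τ`-covering presieve is given by a family of morphisms indexed by a
`κ`-small type. -/
structure IsKappaGeometricSite (κ : Cardinal.{u}) (C : Type u) [Category.{u} C]
    [HasPullbacks C] (τ : Pretopology C) : Prop where
  geometric : KappaGeometric κ C
  coproduct_mem : ∀ {ι : Type u}, Cardinal.mk ι < κ → ∀ (X : ι → C) (c : Cofan X),
    IsColimit c → Presieve.ofArrows X c.inj ∈ τ c.pt
  small_coverings : ∀ ⦃X : C⦄ (R : Presieve X), R ∈ τ X →
    ∃ (ι : Type u), Cardinal.mk ι < κ ∧
      ∃ (Z : ι → C) (g : ∀ i, Z i ⟶ X), R = Presieve.ofArrows Z g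

/-!
A `τ`-sheaf is a sheaf for every coproduct cover `{Xᵢ ⟶ ∐ Xⱼ}`. Disjointness makes every family
on such a cover compatible (two inclusions only meet in an initial object, on which `F` is a
singleton, being a sheaf for the empty cover), so `F (∐ Xⱼ) ≅ ∏ F Xᵢ`; and the map `∐ Uᵢ ⟶ X`
generates a covering sieve, since it receives every `Uᵢ ⟶ X`.

Conversely, a compatible family `(xᵢ)` on a `κ`-small cover `{fᵢ : Uᵢ ⟶ X}` is the restriction
of a unique `y ∈ F (∐ Uᵢ)`, and it remains to glue `y` along `d : ∐ Uᵢ ⟶ X`, i.e. to check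
`g₁* y = g₂* y` whenever `g₁ ≫ d = g₂ ≫ d`. As coproducts are universal and `F` turns them into
products, this may be checked after pulling back along the inclusions, first for `g₁` and then
for `g₂`; there both maps factor through some `Uᵢ` and `Uⱼ`, where it is the compatibility of `x`.
-/

open Opposite

variable {C : Type u} [Category.{u} C]

theorem nonempty_isLimit_mapCone_cofan_op_iff (F : Cᵒᵖ ⥤ Type u) {ι : Type u} {X : ι → C}
    (c : Cofan X) :
    Nonempty (IsLimit (F.mapCone c.op)) ↔
      ∀ x : ∀ i, F.obj (op (X i)), ∃! y : F.obj (op c.pt), ∀ i, F.map (c.inj i).op y = x i := by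
  rw [Types.isLimit_iff]
  constructor
  · intro h x
    simpa using h (fun j => x j.as) (by rintro ⟨i⟩ ⟨j⟩ ⟨⟨h⟩⟩; cases h; simp)
  · intro h s _
    simpa using h (fun i => s ⟨i⟩)

namespace PreservesKappaSmallProducts

variable {κ : Cardinal.{u}} {F : Cᵒᵖ ⥤ Type u} {ι : Type u} {X : ι → C} {c : Cofan X}

theorem existsUnique_map_inj_eq (hF : PreservesKappaSmallProducts κ F) (hι : Cardinal.mk ι < κ)
    (hc : IsColimit c) (x : ∀ i, F.obj (op (X i))) :
    ∃! y : F.obj (op c.pt), ∀ i, F.map (c.inj i).op y = x i :=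
  (nonempty_isLimit_mapCone_cofan_op_iff F c).mp (hF hι X c hc) x

theorem ext (hF : PreservesKappaSmallProducts κ F) (hι : Cardinal.mk ι < κ) (hc : IsColimit c)
    {a b : F.obj (op c.pt)} (h : ∀ i, F.map (c.inj i).op a = F.map (c.inj i).op b) : a = b :=
  (existsUnique_map_inj_eq hF hι hc _).unique h fun _ => rfl

theorem ext_of_pullback [HasPullbacks C] (hF : PreservesKappaSmallProducts κ F)
    (hC : KappaGeometric κ C) (hι : Cardinal.mk ι < κ) (hc : IsColimit c) {Z : C}
    (g : Z ⟶ c.pt) {a b : F.obj (op Z)}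
    (h : ∀ i, F.map (pullback.snd (c.inj i) g).op a = F.map (pullback.snd (c.inj i) g).op b) :
    a = b :=
  PreservesKappaSmallProducts.ext hF hι (hC.universal hι X c hc g).some h

end PreservesKappaSmallProducts

section Gluing

variable [HasPullbacks C] {κ : Cardinal.{u}} {F : Cᵒᵖ ⥤ Type u} {ι : Type u} {X : C}
  {U : ι → C} {f : ∀ i, U i ⟶ X} {c : Cofan U}

theorem map_eq_map_of_comp_desc_eq (hF : PreservesKappaSmallProducts κ F)
    (hC : KappaGeometric κ C) (hι : Cardinal.mk ι < κ) (hc : IsColimit c) {y : F.obj (op c.pt)}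
    (hy : ∀ i j {W : C} (a : W ⟶ U i) (b : W ⟶ U j), a ≫ f i = b ≫ f j →
      F.map (a ≫ c.inj i).op y = F.map (b ≫ c.inj j).op y)
    {W : C} (g₁ g₂ : W ⟶ c.pt)
    (h : g₁ ≫ Cofan.IsColimit.desc hc f = g₂ ≫ Cofan.IsColimit.desc hc f) :
    F.map g₁.op y = F.map g₂.op y := by
  have hd := Cofan.IsColimit.fac hc f
  have hfactor : ∀ {V : C} {i} (a : V ⟶ U i) (g : V ⟶ c.pt),
      a ≫ f i = g ≫ Cofan.IsColimit.desc hc f →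
      F.map (a ≫ c.inj i).op y = F.map g.op y := by
    intro V i a g hag
    refine PreservesKappaSmallProducts.ext_of_pullback hF hC hι hc g fun j => ?_
    rw [← Functor.map_comp_apply, ← Functor.map_comp_apply, ← op_comp, ← op_comp,
      ← pullback.condition, ← Category.assoc]
    refine hy i j _ _ ?_
    simp only [Category.assoc, hag, ← hd j, pullback.condition_assoc]
  refine PreservesKappaSmallProducts.ext_of_pullback hF hC hι hc g₁ fun i => ?_
  rw [← Functor.map_comp_apply, ← Functor.map_comp_apply, ← op_comp, ← op_comp,
    ← pullback.condition]
  exact hfactor _ _ (by simp only [Category.assoc, h, ← hd i, pullback.condition_assoc])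

theorem isSheafFor_ofArrows_of_isSheafFor_singleton_desc (hF : PreservesKappaSmallProducts κ F)
    (hC : KappaGeometric κ C) (hι : Cardinal.mk ι < κ) (hc : IsColimit c)
    (hd : Presieve.IsSheafFor F (.singleton (Cofan.IsColimit.desc hc f))) :
    Presieve.IsSheafFor F (.ofArrows U f) := by
  have hfac := Cofan.IsColimit.fac hc f
  rw [Presieve.isSheafFor_arrows_iff]
  intro x hx
  obtain ⟨y, hy, -⟩ := PreservesKappaSmallProducts.existsUnique_map_inj_eq hF hι hc x
  have hy_compat : ∀ i j {W : C} (a : W ⟶ U i) (b : W ⟶ U j), a ≫ f i = b ≫ f j →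
      F.map (a ≫ c.inj i).op y = F.map (b ≫ c.inj j).op y := by
    intro i j W a b hab
    rw [op_comp, op_comp, Functor.map_comp_apply, Functor.map_comp_apply, hy, hy]
    exact hx i j W a b hab
  obtain ⟨t, ht, ht_uniq⟩ := Presieve.isSheafFor_singleton.mp hd y
    (map_eq_map_of_comp_desc_eq hF hC hι hc hy_compat)
  refine ⟨t, fun i => ?_, fun t' ht' => ht_uniq t' ?_⟩
  · rw [← hfac i, op_comp, Functor.map_comp_apply, ht, hy]
  · refine PreservesKappaSmallProducts.ext hF hι hc fun i => ?_
    rw [← Functor.map_comp_apply, ← op_comp, hfac, ht', hy]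

end Gluing

namespace IsKappaGeometricSite

variable [HasPullbacks C] {κ : Cardinal.{u}} {τ : Pretopology C} {F : Cᵒᵖ ⥤ Type u}

theorem cardinal_pos (hτ : IsKappaGeometricSite κ C τ) (X : C) : 0 < κ := by
  obtain ⟨ι, hι, -⟩ := hτ.small_coverings _ (τ.has_isos (𝟙 X))
  exact zero_le.trans_lt hι

theorem isSheafFor_ofArrows_inj (hτ : IsKappaGeometricSite κ C τ)
    (hF : Presieve.IsSheaf τ.toGrothendieck F) {ι : Type u} (hι : Cardinal.mk ι < κ)
    {X : ι → C} {c : Cofan X} (hc : IsColimit c) :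
    Presieve.IsSheafFor F (.ofArrows X c.inj) :=
  (Presieve.isSheaf_pretopology _).mp hF _ (hτ.coproduct_mem hι X c hc)

theorem subsingleton_obj_of_isInitial (hτ : IsKappaGeometricSite κ C τ)
    (hF : Presieve.IsSheaf τ.toGrothendieck F) {P : C} (hP : IsInitial P) :
    Subsingleton (F.obj (op P)) := by
  let c : Cofan (fun i : PEmpty.{u + 1} => (i.elim : C)) := Cofan.mk P fun i => i.elim
  have hc : IsColimit c :=
    Cofan.IsColimit.mk _ (fun t => hP.to t.pt) (fun _ i => i.elim) (fun _ _ _ => hP.hom_ext _ _)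
  have hι : Cardinal.mk PEmpty.{u + 1} < κ := by
    simpa using hτ.cardinal_pos P
  have hsheaf := (Presieve.isSheafFor_arrows_iff _ _).mp (hτ.isSheafFor_ofArrows_inj hF hι hc)
  obtain ⟨t, -, ht⟩ := hsheaf (fun i => i.elim) fun i => i.elim
  exact ⟨fun a b => (ht a fun i => i.elim).trans (ht b fun i => i.elim).symm⟩

theorem arrows_compatible_inj (hτ : IsKappaGeometricSite κ C τ)
    (hF : Presieve.IsSheaf τ.toGrothendieck F) {ι : Type u} (hι : Cardinal.mk ι < κ)
    {X : ι → C} {c : Cofan X} (hc : IsColimit c) (x : ∀ i, F.obj (op (X i))) :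
    Presieve.Arrows.Compatible F c.inj x := by
  intro i j Z gi gj hg
  by_cases hij : i = j
  · subst hij
    have := hτ.geometric.mono_inj hι X c hc i
    rw [cancel_mono] at hg
    rw [hg]
  · obtain ⟨hP⟩ := hτ.geometric.disjoint hι X c hc i j hij
    have := hτ.subsingleton_obj_of_isInitial hF hP
    obtain ⟨l, rfl, rfl⟩ : ∃ l : Z ⟶ pullback (c.inj i) (c.inj j),
        l ≫ pullback.fst _ _ = gi ∧ l ≫ pullback.snd _ _ = gj :=
      ⟨pullback.lift gi gj hg, pullback.lift_fst _ _ _, pullback.lift_snd _ _ _⟩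
    rw [op_comp, op_comp, Functor.map_comp_apply, Functor.map_comp_apply]
    exact congrArg _ (Subsingleton.elim _ _)

theorem preservesKappaSmallProducts_of_isSheaf (hτ : IsKappaGeometricSite κ C τ)
    (hF : Presieve.IsSheaf τ.toGrothendieck F) : PreservesKappaSmallProducts κ F :=
  fun hι _ c hc => (nonempty_isLimit_mapCone_cofan_op_iff F c).mpr fun x =>
    (Presieve.isSheafFor_arrows_iff _ _).mp (hτ.isSheafFor_ofArrows_inj hF hι hc) x
      (hτ.arrows_compatible_inj hF hι hc x)

theorem isSheaf_of_isSheafFor_singleton_desc (hτ : IsKappaGeometricSite κ C τ)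
    (hF : PreservesKappaSmallProducts κ F)
    (hd : ∀ {ι : Type u}, Cardinal.mk ι < κ → ∀ {X : C} (U : ι → C) (f : ∀ i, U i ⟶ X),
      Presieve.ofArrows U f ∈ τ X → ∀ (c : Cofan U) (hc : IsColimit c),
        Presieve.IsSheafFor F (.singleton (Cofan.IsColimit.desc hc f))) :
    Presieve.IsSheaf τ.toGrothendieck F := by
  rw [Presieve.isSheaf_pretopology]
  intro X R hR
  obtain ⟨ι, hι, U, f, rfl⟩ := hτ.small_coverings R hR
  have := hτ.geometric.hasCoproduct hι U
  exact isSheafFor_ofArrows_of_isSheafFor_singleton_desc hF hτ.geometric hι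
    (coproductIsCoproduct U) (hd hι U f hR _ _)

end IsKappaGeometricSite

theorem isSheafFor_singleton_desc_of_isSheaf [HasPullbacks C] {τ : Pretopology C}
    {F : Cᵒᵖ ⥤ Type u} (hF : Presieve.IsSheaf τ.toGrothendieck F) {ι : Type u} {X : C}
    {U : ι → C} {f : ∀ i, U i ⟶ X} (hf : Presieve.ofArrows U f ∈ τ X) {c : Cofan U}
    (hc : IsColimit c) : Presieve.IsSheafFor F (.singleton (Cofan.IsColimit.desc hc f)) := by
  rw [Presieve.isSheafFor_iff_generate]
  refine hF _ ⟨_, hf, ?_⟩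
  rintro _ _ ⟨i⟩
  exact ⟨_, c.inj i, _, Presieve.singleton.mk, Cofan.IsColimit.fac hc f i⟩

theorem statement1_general (κ : Cardinal.{u}) (C : Type u) [Category.{u} C]
    [HasPullbacks C] (τ : Pretopology C) (hτ : IsKappaGeometricSite κ C τ)
    (F : Cᵒᵖ ⥤ Type u) :
    Presieve.IsSheaf τ.toGrothendieck F ↔
      (PreservesKappaSmallProducts κ F ∧
        ∀ {ι : Type u}, Cardinal.mk ι < κ → ∀ {X : C} (U : ι → C) (f : ∀ i, U i ⟶ X),
          Presieve.ofArrows U f ∈ τ X →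
            ∀ (c : Cofan U) (hc : IsColimit c),
              Presieve.IsSheafFor F (Presieve.singleton (hc.desc (Cofan.mk X f)))) :=
  ⟨fun hF => ⟨hτ.preservesKappaSmallProducts_of_isSheaf hF,
      fun _ _ _ _ hf _ hc => isSheafFor_singleton_desc_of_isSheaf hF hf hc⟩,
    fun ⟨hprod, hd⟩ => hτ.isSheaf_of_isSheafFor_singleton_desc hprod @hd⟩

theorem statement1 (κ : Cardinal.{u}) (hκ : κ.IsRegular) (C : Type u) [Category.{u} C]
    [HasPullbacks C] (τ : Pretopology C) (hτ : IsKappaGeometricSite κ C τ)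
    (F : Cᵒᵖ ⥤ Type u) :
    Presieve.IsSheaf τ.toGrothendieck F ↔
      (PreservesKappaSmallProducts κ F ∧
        ∀ {ι : Type u}, Cardinal.mk ι < κ → ∀ {X : C} (U : ι → C) (f : ∀ i, U i ⟶ X),
          Presieve.ofArrows U f ∈ τ X →
            ∀ (c : Cofan U) (hc : IsColimit c),
              Presieve.IsSheafFor F (Presieve.singleton (hc.desc (Cofan.mk X f)))) :=
  statement1_general κ C τ hτ F
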